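/- Let B, C be disjoint sets of atoms and let F be an infinitary propositional formula over σ such that the dependency graph DG_{B∪C}[F] has no edge from a vertex in B to a vertex in C. Then for any interpretation I, if I \ (B ∪ C) satisfies F^I, so does I \ B. -/

import Mathlib

/-- Infinitary propositional formulas over signature `σ`:
atoms, conjunctions and disjunctions of (index-)sets of formulas, implication. -/
inductive Formula (σ : Type) : Type 1
  | atom : σ → Formula σ
  | conj : (ι : Type) → (ι → Formula σ) → Formula σ
  | disj : (ι : Type) → (ι → Formula σ) → Formula σ
  | imp : Formula σ → Formula σ → Formula σ

namespace Formula

variable {σ : Type}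

/-- `⊥` is the empty disjunction. -/
def bot : Formula σ := Formula.disj Empty (fun e => e.elim)

/-- Binary conjunction `F ∧ G`. -/
def and (F G : Formula σ) : Formula σ := Formula.conj Bool (fun b => if b then F else G)

/-- Binary disjunction `F ∨ G`. -/
def or (F G : Formula σ) : Formula σ := Formula.disj Bool (fun b => if b then F else G)

/-- Negation `¬F` abbreviates `F → ⊥`. -/
def neg (F : Formula σ) : Formula σ := Formula.imp F bot

/-- Conjunction of a set of atoms. -/
def conjAtoms (S : Set σ) : Formula σ := Formula.conj S (fun p => Formula.atom p.val)

/-- Satisfaction of an infinitary formula by an interpretation `I ⊆ σ`. -/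
def Sat (I : Set σ) : Formula σ → Prop
  | .atom p => p ∈ I
  | .conj _ f => ∀ i, Sat I (f i)
  | .disj _ f => ∃ i, Sat I (f i)
  | .imp F G => Sat I F → Sat I G

open Classical in
/-- The reduct `F^I`. -/
noncomputable def reduct (I : Set σ) : Formula σ → Formula σ
  | .atom p => if p ∈ I then Formula.atom p else bot
  | .conj ι f => Formula.conj ι (fun i => reduct I (f i))
  | .disj ι f => Formula.disj ι (fun i => reduct I (f i))
  | .imp F G => if Sat I (Formula.imp F G) then Formula.imp (reduct I F) (reduct I G) else bot

/-- `I` is an `A`-stable model of `F`: `I` is minimal w.r.t. `≤_A`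
(`J ≤_A I` iff `J ⊆ I` and `I \ J ⊆ A`) among interpretations satisfying `F^I`. -/
def AStable (A : Set σ) (I : Set σ) (F : Formula σ) : Prop :=
  Sat I (reduct I F) ∧ ∀ J : Set σ, J ⊆ I → I \ J ⊆ A → Sat J (reduct I F) → J = I

/-- A stable model is a `σ`-stable model. -/
def Stable (I : Set σ) (F : Formula σ) : Prop := AStable Set.univ I F

/-- The strictly positive atoms `P(F)`. -/
def spos : Formula σ → Set σ
  | .atom p => {p}
  | .conj _ f => ⋃ i, spos (f i)
  | .disj _ f => ⋃ i, spos (f i)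
  | .imp _ H => spos H

/-- `F` is (syntactically) the formula `⊥`, i.e. an empty disjunction. -/
def IsBot : Formula σ → Prop
  | .disj ι _ => IsEmpty ι
  | _ => False

open Classical in
mutual
/-- Positive nonnegated atoms `Pnn(F)`. -/
noncomputable def pnn : Formula σ → Set σ
  | .atom p => {p}
  | .conj _ f => ⋃ i, pnn (f i)
  | .disj _ f => ⋃ i, pnn (f i)
  | .imp G H => if IsBot H then ∅ else nnn G ∪ pnn H

/-- Negative nonnegated atoms `Nnn(F)`. -/
noncomputable def nnn : Formula σ → Set σ
  | .atom _ => ∅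
  | .conj _ f => ⋃ i, nnn (f i)
  | .disj _ f => ⋃ i, nnn (f i)
  | .imp G H => if IsBot H then ∅ else pnn G ∪ nnn H
end

/-- The rules of a formula, as antecedent/consequent pairs. -/
def rules : Formula σ → Set (Formula σ × Formula σ)
  | .atom _ => ∅
  | .conj _ f => ⋃ i, rules (f i)
  | .disj _ f => ⋃ i, rules (f i)
  | .imp G H => insert (G, H) (rules H)

/-- Edge relation of the positive dependency graph `DG_A[F]` (vertex set `A`). -/
noncomputable def DGEdge (F : Formula σ) (A : Set σ) (p q : σ) : Prop :=
  p ∈ A ∧ q ∈ A ∧ ∃ R ∈ rules F, p ∈ spos R.2 ∧ q ∈ pnn R.1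

/-- The atoms occurring in a formula. -/
def atoms : Formula σ → Set σ
  | .atom p => {p}
  | .conj _ f => ⋃ i, atoms (f i)
  | .disj _ f => ⋃ i, atoms (f i)
  | .imp G H => atoms G ∪ atoms H

/-- `G` is a definition for the set `Q` of atoms: a conjunction of formulas
`H ∧ C^∧ → q` with `q ∈ Q`, `C ⊆ Q`, and no atom of `Q` occurring in `H`. -/
def IsDefinition (Q : Set σ) (G : Formula σ) : Prop :=
  ∃ (ι : Type) (g : ι → Formula σ), G = Formula.conj ι g ∧
    ∀ i, ∃ (H : Formula σ) (C : Set σ) (q : σ),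
      q ∈ Q ∧ C ⊆ Q ∧ (∀ p ∈ Q, p ∉ atoms H) ∧
      g i = Formula.imp (Formula.and H (conjAtoms C)) (Formula.atom q)

end Formula

section Graph

variable {V : Type*}

/-- An infinite walk in the directed graph with edge relation `E`. -/
def IsInfWalk (E : V → V → Prop) (w : ℕ → V) : Prop := ∀ i, E (w i) (w (i + 1))

/-- The partition `{P₁, P₂}` is infinitely separable: every infinite walk
visits `P₁` or `P₂` only finitely often. -/
def InfSeparable (E : V → V → Prop) (P1 P2 : Set V) : Prop :=
  ∀ w : ℕ → V, IsInfWalk E w → {i | w i ∈ P1}.Finite ∨ {i | w i ∈ P2}.Finite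

/-- `u` and `v` are in the same strongly connected component:
each is reachable from the other. -/
def SameSCC (E : V → V → Prop) (u v : V) : Prop :=
  Relation.ReflTransGen E u v ∧ Relation.ReflTransGen E v u

/-- The partition `{P₁, P₂}` is separable: every strongly connected
component is contained in `P₁` or in `P₂`. -/
def Separable (E : V → V → Prop) (P1 P2 : Set V) : Prop :=
  ∀ u v, SameSCC E u v → ((u ∈ P1 ∧ v ∈ P1) ∨ (u ∈ P2 ∧ v ∈ P2))

end Graph
/-!
Put `X = I \ (B ∪ C)` and `Y = I \ B`, so `X ⊆ Y` and `Y \ X ⊆ C`. Satisfaction of `F^I` is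
antitone in the interpretation along atoms of `Pnn F` and monotone along atoms of `Nnn F`, so it
can only be lost in passing from `X` to `Y` at a rule `G → H` whose reduct is not `⊥`. The missing
edge leaves two cases: if `Pnn G` misses `C`, then `Y ⊨ G^I` gives `X ⊨ G^I`, hence `X ⊨ H^I`, and
induction on `H` applies; if `P H` misses `B`, then `Y` contains every strictly positive atom of
`H` true in `I`, and `I ⊨ H` already gives `Y ⊨ H^I`.
-/

namespace Formula

variable {σ : Type} {I X Y : Set σ}

lemma not_sat_bot : ¬ Sat X (bot : Formula σ) := fun ⟨e, _⟩ => e.elim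

lemma not_sat_of_isBot {F : Formula σ} (h : IsBot F) : ¬ Sat X F := by
  cases F with
  | disj ι _ => rintro ⟨i, _⟩; exact (h : IsEmpty ι).false i
  | _ => exact h.elim

lemma sat_reduct_atom {p : σ} : Sat X (reduct I (atom p)) ↔ p ∈ I ∧ p ∈ X := by
  by_cases hp : p ∈ I <;> simp [reduct, Sat, hp, not_sat_bot]

lemma sat_reduct_imp {G H : Formula σ} :
    Sat X (reduct I (imp G H)) ↔ Sat I (imp G H) ∧ (Sat X (reduct I G) → Sat X (reduct I H)) := by
  rw [reduct]
  split_ifs with hI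
  · exact ⟨fun h => ⟨hI, h⟩, And.right⟩
  · exact iff_of_false not_sat_bot fun h => hI h.1

lemma sat_of_sat_reduct : ∀ {F : Formula σ}, Sat X (reduct I F) → Sat I F
  | .atom _, h => (sat_reduct_atom.1 h).1
  | .conj _ _, h => fun i => sat_of_sat_reduct (h i)
  | .disj _ _, ⟨i, hi⟩ => ⟨i, sat_of_sat_reduct hi⟩
  | .imp _ _, h => (sat_reduct_imp.1 h).1

lemma sat_reduct_imp_iff_of_isBot {G H : Formula σ} (hH : IsBot H) :
    Sat X (reduct I (imp G H)) ↔ Sat I (imp G H) :=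
  ⟨sat_of_sat_reduct, fun hI => sat_reduct_imp.2
    ⟨hI, fun hG => (not_sat_of_isBot hH (hI (sat_of_sat_reduct hG))).elim⟩⟩

lemma sat_reduct_of_sat_of_spos_subset :
    ∀ {F : Formula σ}, spos F ∩ I ⊆ X → Sat I F → Sat X (reduct I F)
  | .atom _, hs, h => sat_reduct_atom.2 ⟨h, hs ⟨rfl, h⟩⟩
  | .conj _ _, hs, h => fun i =>
      sat_reduct_of_sat_of_spos_subset
        (fun _ hp => hs ⟨Set.mem_iUnion_of_mem i hp.1, hp.2⟩) (h i)
  | .disj _ _, hs, ⟨i, hi⟩ =>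
      ⟨i, sat_reduct_of_sat_of_spos_subset
        (fun _ hp => hs ⟨Set.mem_iUnion_of_mem i hp.1, hp.2⟩) hi⟩
  | .imp _ _, hs, h => sat_reduct_imp.2
      ⟨h, fun hG => sat_reduct_of_sat_of_spos_subset hs (h (sat_of_sat_reduct hG))⟩

lemma sat_reduct_anti_pnn_mono_nnn (hXY : X ⊆ Y) :
    ∀ F : Formula σ,
      (Disjoint (pnn F) (Y \ X) → Sat Y (reduct I F) → Sat X (reduct I F)) ∧
      (Disjoint (nnn F) (Y \ X) → Sat X (reduct I F) → Sat Y (reduct I F))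
  | .atom p => by
      refine ⟨fun hp h => ?_, fun _ h => ?_⟩
      · obtain ⟨hpI, hpY⟩ := sat_reduct_atom.1 h
        by_contra hpX
        exact Set.disjoint_left.1 hp rfl ⟨hpY, fun hX => hpX (sat_reduct_atom.2 ⟨hpI, hX⟩)⟩
      · obtain ⟨hpI, hpX⟩ := sat_reduct_atom.1 h
        exact sat_reduct_atom.2 ⟨hpI, hXY hpX⟩
  | .conj _ f => by
      simp only [pnn, nnn, Set.disjoint_iUnion_left]
      exact ⟨fun hp h i => (sat_reduct_anti_pnn_mono_nnn hXY (f i)).1 (hp i) (h i),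
        fun hn h i => (sat_reduct_anti_pnn_mono_nnn hXY (f i)).2 (hn i) (h i)⟩
  | .disj _ f => by
      simp only [pnn, nnn, Set.disjoint_iUnion_left]
      exact ⟨fun hp ⟨i, hi⟩ => ⟨i, (sat_reduct_anti_pnn_mono_nnn hXY (f i)).1 (hp i) hi⟩,
        fun hn ⟨i, hi⟩ => ⟨i, (sat_reduct_anti_pnn_mono_nnn hXY (f i)).2 (hn i) hi⟩⟩
  | .imp G H => by
      by_cases hH : IsBot H
      · simp only [sat_reduct_imp_iff_of_isBot hH]
        exact ⟨fun _ => id, fun _ => id⟩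
      have ihG := sat_reduct_anti_pnn_mono_nnn hXY G
      have ihH := sat_reduct_anti_pnn_mono_nnn hXY H
      simp only [pnn, nnn, hH, if_false, Set.disjoint_union_left, sat_reduct_imp]
      exact ⟨fun hp h => ⟨h.1, fun hG => ihH.1 hp.2 (h.2 (ihG.2 hp.1 hG))⟩,
        fun hn h => ⟨h.1, fun hG => ihH.2 hn.2 (h.2 (ihG.1 hn.1 hG))⟩⟩

lemma sat_reduct_diff_of_rules {B C : Set σ} :
    ∀ {F : Formula σ}, (∀ R ∈ rules F, Disjoint (spos R.2) B ∨ Disjoint (pnn R.1) C) →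
      Sat (I \ (B ∪ C)) (reduct I F) → Sat (I \ B) (reduct I F)
  | .atom _, _, h => by
      rw [sat_reduct_atom] at h ⊢
      exact ⟨h.1, h.2.1, fun hB => h.2.2 (Or.inl hB)⟩
  | .conj _ _, hr, h => fun i =>
      sat_reduct_diff_of_rules (fun R hR => hr R (Set.mem_iUnion_of_mem i hR)) (h i)
  | .disj _ _, hr, ⟨i, hi⟩ =>
      ⟨i, sat_reduct_diff_of_rules (fun R hR => hr R (Set.mem_iUnion_of_mem i hR)) hi⟩
  | .imp G H, hr, h => by
      obtain ⟨hI, hGH⟩ := sat_reduct_imp.1 h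
      refine sat_reduct_imp.2 ⟨hI, fun hG => ?_⟩
      rcases hr (G, H) (Set.mem_insert _ _) with hspos | hpnn
      · exact sat_reduct_of_sat_of_spos_subset
          (fun _ hp => ⟨hp.2, Set.disjoint_left.1 hspos hp.1⟩) (hI (sat_of_sat_reduct hG))
      · have hdiff : Disjoint (pnn G) ((I \ B) \ (I \ (B ∪ C))) :=
          hpnn.mono_right fun p ⟨⟨hpI, hpB⟩, hp⟩ => by
            by_contra hpC
            exact hp ⟨hpI, by simp [hpB, hpC]⟩
        have hsub : I \ (B ∪ C) ⊆ I \ B := Set.sdiff_subset_sdiff_right Set.subset_union_left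
        exact sat_reduct_diff_of_rules (fun R hR => hr R (Set.mem_insert_of_mem _ hR))
          (hGH ((sat_reduct_anti_pnn_mono_nnn hsub G).1 hdiff hG))

end Formula

/-- if `B, C` are disjoint and `DG_{B∪C}[F]` has no edge from `B`
to `C`, then `I \ (B ∪ C) ⊨ F^I` implies `I \ B ⊨ F^I`. -/
theorem sat_reduct_no_edge {σ : Type} (B C : Set σ) (hBC : Disjoint B C)
    (F : Formula σ)
    (hedge : ∀ p ∈ B, ∀ q ∈ C, ¬ Formula.DGEdge F (B ∪ C) p q)
    (I : Set σ) (h : Formula.Sat (I \ (B ∪ C)) (Formula.reduct I F)) :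
    Formula.Sat (I \ B) (Formula.reduct I F) := by
  refine Formula.sat_reduct_diff_of_rules (fun R hR => ?_) h
  by_contra! hR'
  obtain ⟨p, hpH, hpB⟩ := Set.not_disjoint_iff.1 hR'.1
  obtain ⟨q, hqG, hqC⟩ := Set.not_disjoint_iff.1 hR'.2
  exact hedge p hpB q hqC ⟨Or.inl hpB, Or.inr hqC, R, hR, hpH, hqG⟩
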